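/- arXiv:1608.06779 — 2 statements merged into one kernel-verified Lean document; each statement's English description precedes it below -/
import Mathlib

section
/- Let a be a Moore-Penrose invertible element of a unital *-ring R with Moore-Penrose inverse a†. Then the following are equivalent: (i) a is core invertible; (ii) a is group invertible; (iii) u = a* + 1 − a a† is invertible. In this case, (u⁻²)* a is the group inverse of a and (u⁻¹)* u⁻¹ a* is the core inverse of a. -/
/-- `x` is a group inverse of `a`. -/
def IsGroupInverse {R : Type*} [Ring R] (a x : R) : Prop :=
  a * x * a = a ∧ x * a * x = x ∧ a * x = x * a

/-- `x` is a Moore-Penrose inverse of `a`. -/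
def IsMPInverse {R : Type*} [Ring R] [StarRing R] (a x : R) : Prop :=
  a * x * a = a ∧ x * a * x = x ∧ star (a * x) = a * x ∧ star (x * a) = x * a

/-- `x` is a core inverse of `a`. -/
def IsCoreInverse {R : Type*} [Ring R] [StarRing R] (a x : R) : Prop :=
  a * x * a = a ∧ x * a * x = x ∧ star (a * x) = a * x ∧ x * a ^ 2 = a ∧ a * x ^ 2 = x

/-- Core invertible implies group invertible: `x*x*a` is a group inverse. -/
lemma keyA {R : Type*} [Ring R] [StarRing R] (a x : R) (hx : IsCoreInverse a x) :
    IsGroupInverse a (x * x * a) := by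
  obtain ⟨h1, h2, h3, h4, h5⟩ := hx
  rw [pow_two] at h4 h5
  have h4' : x * (a * a) = a := h4
  have h5' : a * (x * x) = x := h5
  have hGa : (x * x * a) * a = x * a := by
    calc (x * x * a) * a = x * (x * (a * a)) := by noncomm_ring
    _ = x * a := by rw [h4']
  have haG : a * (x * x * a) = x * a := by
    calc a * (x * x * a) = (a * (x * x)) * a := by noncomm_ring
    _ = x * a := by rw [h5']
  refine ⟨?_, ?_, haG.trans hGa.symm⟩
  · calc a * (x * x * a) * a = (a * (x * x)) * (a * a) := by noncomm_ring
    _ = x * (a * a) := by rw [h5']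
    _ = a := h4'
  · calc (x * x * a) * a * (x * x * a) = (x * a) * (x * x * a) := by rw [hGa]
    _ = ((x * a * x) * x) * a := by noncomm_ring
    _ = x * x * a := by rw [h2]

/-- Group invertible (with MP inverse) implies `a* + 1 - a d` is a unit. -/
lemma keyB {R : Type*} [Ring R] [StarRing R] (a d g : R) (hd : IsMPInverse a d)
    (hg : IsGroupInverse a g) : IsUnit (star a + 1 - a * d) := by
  obtain ⟨hd1, hd2, hd3, hd4⟩ := hd
  obtain ⟨hg1, hg2, hg3⟩ := hg
  have hg' : a * g * g = g := by rw [hg3, hg2]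
  have hpg : a * d * g = g := by
    conv_lhs => rw [← hg']
    calc a * d * (a * g * g) = a * d * a * g * g := by noncomm_ring
    _ = a * g * g := by rw [hd1]
    _ = g := hg'
  have hga2 : g * a * a = a := by rw [← hg3, hg1]
  have hpp : (a * d) * (a * d) = a * d := by
    calc (a * d) * (a * d) = (a * d * a) * d := by noncomm_ring
    _ = a * d := by rw [hd1]
  have hagp : a * (g * (a * d)) = a * d := by
    calc a * (g * (a * d)) = (a * g * a) * d := by noncomm_ring
    _ = a * d := by rw [hg1]
  have haga : a * (g * a) = a := by rw [← mul_assoc, hg1]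
  have hpgp : (a * d) * (g * (a * d)) = g * (a * d) := by
    calc (a * d) * (g * (a * d)) = (a * d * g) * (a * d) := by noncomm_ring
    _ = g * (a * d) := by rw [hpg]
  have hpga : (a * d) * (g * a) = g * a := by
    calc (a * d) * (g * a) = (a * d * g) * a := by noncomm_ring
    _ = g * a := by rw [hpg]
  have hgpa : (g * (a * d)) * a = g * a := by
    calc (g * (a * d)) * a = g * (a * d * a) := by noncomm_ring
    _ = g * a := by rw [hd1]
  have hgpp : (g * (a * d)) * (a * d) = g * (a * d) := by
    calc (g * (a * d)) * (a * d) = g * ((a * d) * (a * d)) := by noncomm_ring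
    _ = g * (a * d) := by rw [hpp]
  have hgap : g * a * (a * d) = a * d := by
    calc g * a * (a * d) = (g * a * a) * d := by noncomm_ring
    _ = a * d := by rw [hga2]
  have hvt : (a + 1 - a * d) * (g * (a * d) + 1 - g * a) = 1 := by
    calc (a + 1 - a * d) * (g * (a * d) + 1 - g * a)
        = a * (g * (a * d)) + a - a * (g * a) + (g * (a * d)) + 1 - g * a
          - (a * d) * (g * (a * d)) - a * d + (a * d) * (g * a) := by noncomm_ring
    _ = a * d + a - a + (g * (a * d)) + 1 - g * a - (g * (a * d)) - a * d + g * a := by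
        rw [hagp, haga, hpgp, hpga]
    _ = 1 := by abel
  have htv : (g * (a * d) + 1 - g * a) * (a + 1 - a * d) = 1 := by
    calc (g * (a * d) + 1 - g * a) * (a + 1 - a * d)
        = (g * (a * d)) * a + (g * (a * d)) - (g * (a * d)) * (a * d) + a + 1 - a * d
          - g * a * a - g * a + g * a * (a * d) := by noncomm_ring
    _ = g * a + (g * (a * d)) - (g * (a * d)) + a + 1 - a * d - a - g * a + a * d := by
        rw [hgpa, hgpp, hga2, hgap]
    _ = 1 := by abel
  have hsv : star (a + 1 - a * d) = star a + 1 - a * d := by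
    rw [star_sub, star_add, star_one, hd3]
  have h1 : (star a + 1 - a * d) * star (g * (a * d) + 1 - g * a) = 1 := by
    rw [← hsv, ← star_mul, htv, star_one]
  have h2 : star (g * (a * d) + 1 - g * a) * (star a + 1 - a * d) = 1 := by
    rw [← hsv, ← star_mul, hvt, star_one]
  exact ⟨⟨star a + 1 - a * d, star (g * (a * d) + 1 - g * a), h1, h2⟩, rfl⟩

/-- If `w` is a two-sided inverse of `a* + 1 - a d`, the stated formulas give
the group and core inverses of `a`. -/
lemma keyC {R : Type*} [Ring R] [StarRing R] (a d : R) (hd : IsMPInverse a d) (w : R)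
    (hw1 : w * (star a + 1 - a * d) = 1) (hw2 : (star a + 1 - a * d) * w = 1) :
    IsGroupInverse a (star (w * w) * a) ∧ IsCoreInverse a (star w * w * star a) := by
  obtain ⟨hd1, hd2, hd3, hd4⟩ := hd
  set s := star w with hs
  have hsu : star (star a + 1 - a * d) = a + 1 - a * d := by
    rw [star_sub, star_add, star_one, star_star, hd3]
  have hvs : (a + 1 - a * d) * s = 1 := by
    have h := congrArg star hw1
    rw [star_mul, star_one, hsu] at h
    exact h
  have hsv : s * (a + 1 - a * d) = 1 := by
    have h := congrArg star hw2
    rw [star_mul, star_one, hsu] at h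
    exact h
  have hpp : (a * d) * (a * d) = a * d := by
    calc (a * d) * (a * d) = (a * d * a) * d := by noncomm_ring
    _ = a * d := by rw [hd1]
  have h1 : (1 - a * d) * (a + 1 - a * d) = 1 - a * d := by
    calc (1 - a * d) * (a + 1 - a * d)
        = a + 1 - a * d - (a * d * a) - a * d + (a * d) * (a * d) := by noncomm_ring
    _ = a + 1 - a * d - a - a * d + a * d := by rw [hd1, hpp]
    _ = 1 - a * d := by abel
  have hps : (1 - a * d) * s = 1 - a * d := by
    conv_lhs => rw [← h1]
    rw [mul_assoc, hvs, mul_one]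
  have hps' : a * d * s = s - 1 + a * d := by
    have h : s - a * d * s = 1 - a * d := by rw [← hps]; noncomm_ring
    calc a * d * s = s - (s - a * d * s) := by abel
    _ = s - (1 - a * d) := by rw [h]
    _ = s - 1 + a * d := by abel
  have hexp : a * s + s - a * d * s = 1 := by rw [← hvs]; noncomm_ring
  rw [hps'] at hexp
  have has : a * s = a * d := by
    calc a * s = (a * s + s - (s - 1 + a * d)) - 1 + a * d := by abel
    _ = 1 - 1 + a * d := by rw [hexp]
    _ = a * d := by abel
  have hsa : s * a = 1 - s + s * (a * d) := by
    have h : s * a + s - s * (a * d) = 1 := by rw [← hsv]; noncomm_ring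
    calc s * a = (s * a + s - s * (a * d)) - s + s * (a * d) := by abel
    _ = 1 - s + s * (a * d) := by rw [h]
  have hsaa : s * (a * a) = a := by
    calc s * (a * a) = (s * a) * a := by rw [← mul_assoc]
    _ = (1 - s + s * (a * d)) * a := by rw [hsa]
    _ = a - s * a + s * ((a * d) * a) := by noncomm_ring
    _ = a - s * a + s * a := by rw [hd1]
    _ = a := by abel
  constructor
  · -- group inverse : star (w*w) * a = s*s*a
    have hww : star (w * w) = s * s := by rw [star_mul]
    rw [hww]
    have hGa : (s * s * a) * a = s * a := by
      calc (s * s * a) * a = s * (s * (a * a)) := by noncomm_ring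
      _ = s * a := by rw [hsaa]
    have haG : a * (s * s * a) = s * a := by
      calc a * (s * s * a) = ((a * s) * s) * a := by noncomm_ring
      _ = ((a * d) * s) * a := by rw [has]
      _ = (s - 1 + a * d) * a := by rw [hps']
      _ = s * a - a + a * d * a := by noncomm_ring
      _ = s * a - a + a := by rw [hd1]
      _ = s * a := by abel
    refine ⟨?_, ?_, haG.trans hGa.symm⟩
    · calc a * (s * s * a) * a = (a * (s * s * a)) * a := by noncomm_ring
      _ = (s * a) * a := by rw [haG]
      _ = s * (a * a) := by rw [mul_assoc]
      _ = a := hsaa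
    · calc (s * s * a) * a * (s * s * a) = (s * a) * (s * s * a) := by rw [hGa]
      _ = (s * ((a * s) * s)) * a := by noncomm_ring
      _ = (s * ((a * d) * s)) * a := by rw [has]
      _ = (s * (s - 1 + a * d)) * a := by rw [hps']
      _ = s * s * a - s * a + s * (a * d * a) := by noncomm_ring
      _ = s * s * a - s * a + s * a := by rw [hd1]
      _ = s * s * a := by abel
  · -- core inverse : star w * w * star a = s * w * star a = s * (a*d)
    have hwsa : w * star a = a * d := by
      have h := congrArg star has
      rw [star_mul, star_star, hd3] at h
      exact h
    have hX : s * w * star a = s * (a * d) := by rw [mul_assoc, hwsa]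
    rw [show (star w * w * star a : R) = s * w * star a from rfl, hX]
    have haX : a * (s * (a * d)) = a * d := by
      calc a * (s * (a * d)) = (a * s) * (a * d) := by rw [← mul_assoc]
      _ = (a * d) * (a * d) := by rw [has]
      _ = a * d := hpp
    refine ⟨?_, ?_, ?_, ?_, ?_⟩
    · calc a * (s * (a * d)) * a = (a * (s * (a * d))) * a := by noncomm_ring
      _ = (a * d) * a := by rw [haX]
      _ = a := hd1
    · calc (s * (a * d)) * a * (s * (a * d))
          = (s * ((a * d) * a)) * (s * (a * d)) := by noncomm_ring
      _ = (s * a) * (s * (a * d)) := by rw [hd1]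
      _ = s * ((a * s) * (a * d)) := by noncomm_ring
      _ = s * ((a * d) * (a * d)) := by rw [has]
      _ = s * (a * d) := by rw [hpp]
    · rw [haX, hd3]
    · calc (s * (a * d)) * a ^ 2 = s * (((a * d) * a) * a) := by noncomm_ring
      _ = s * (a * a) := by rw [hd1]
      _ = a := hsaa
    · calc a * (s * (a * d)) ^ 2 = ((a * s) * (a * d)) * (s * (a * d)) := by noncomm_ring
      _ = ((a * d) * (a * d)) * (s * (a * d)) := by rw [has]
      _ = (a * d) * (s * (a * d)) := by rw [hpp]
      _ = ((a * d) * s) * (a * d) := by noncomm_ring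
      _ = (s - 1 + a * d) * (a * d) := by rw [hps']
      _ = s * (a * d) - a * d + (a * d) * (a * d) := by noncomm_ring
      _ = s * (a * d) - a * d + a * d := by rw [hpp]
      _ = s * (a * d) := by abel

/-- Proposition 5.9: for a Moore-Penrose invertible element `a` with
Moore-Penrose inverse `d`, `a` is core invertible iff `a` is group invertible
iff `u = a* + 1 - a d` is invertible; in this case `(u⁻²)* a` is the group
inverse and `(u⁻¹)* u⁻¹ a*` is the core inverse of `a`. -/
theorem stmt_18 {R : Type*} [Ring R] [StarRing R] (a d : R)
    (hd : IsMPInverse a d) :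
    ((∃ x, IsCoreInverse a x) ↔ (∃ x, IsGroupInverse a x)) ∧
    ((∃ x, IsCoreInverse a x) ↔ IsUnit (star a + 1 - a * d)) ∧
    (∀ w, w * (star a + 1 - a * d) = 1 → (star a + 1 - a * d) * w = 1 →
      IsGroupInverse a (star (w * w) * a) ∧
      IsCoreInverse a (star w * w * star a)) := by
  have unitToCore : IsUnit (star a + 1 - a * d) → ∃ x, IsCoreInverse a x := by
    rintro ⟨U, hval⟩
    have hu1 : (star a + 1 - a * d) * ↑U⁻¹ = 1 := by rw [← hval]; exact U.mul_inv
    have hu2 : (↑U⁻¹ : R) * (star a + 1 - a * d) = 1 := by rw [← hval]; exact U.inv_mul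
    exact ⟨_, (keyC a d hd _ hu2 hu1).2⟩
  have groupToUnit : (∃ x, IsGroupInverse a x) → IsUnit (star a + 1 - a * d) := by
    rintro ⟨g, hg⟩
    exact keyB a d g hd hg
  have coreToGroup : (∃ x, IsCoreInverse a x) → ∃ x, IsGroupInverse a x := by
    rintro ⟨x, hx⟩
    exact ⟨_, keyA a x hx⟩
  refine ⟨⟨coreToGroup, fun h => unitToCore (groupToUnit h)⟩,
    ⟨fun h => groupToUnit (coreToGroup h), unitToCore⟩,
    fun w h1 h2 => keyC a d hd w h1 h2⟩
end

section
/- Let a be a group invertible element of a unital *-ring R with group inverse a^#. Then the following are equivalent: (i) a is both core invertible and dual core invertible; (ii) a is Moore-Penrose invertible; (iii) u = a* + 1 − a a^# is invertible. In this case, (u⁻¹)* a (u⁻¹)* is the Moore-Penrose inverse of a, a^# a (u⁻¹)* is the core inverse of a, and (u⁻¹)* a a^# is the dual core inverse of a. -/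
/-- `x` is a dual core inverse of `a`. -/
def IsDualCoreInverse {R : Type*} [Ring R] [StarRing R] (a x : R) : Prop :=
  a * x * a = a ∧ x * a * x = x ∧ star (x * a) = x * a ∧ a ^ 2 * x = a ∧ x ^ 2 * a = x

section Aux

variable {R : Type*} [Ring R] [StarRing R]

/-- If `y` is a `{1}`-inverse of `a` with `a*y` and `y*a` self-adjoint,
then `y*a*y` is a Moore-Penrose inverse of `a`. -/
lemma stmt19_mp_generic (a y : R) (h1 : a * y * a = a)
    (h3 : star (a * y) = a * y) (h4 : star (y * a) = y * a) :
    IsMPInverse a (y * a * y) := by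
  have h1' : a * (y * a) = a := by rw [← mul_assoc]; exact h1
  have K : ∀ t : R, a * (y * (a * t)) = a * t := fun t => by
    rw [← mul_assoc, ← mul_assoc, h1]
  refine ⟨?_, ?_, ?_, ?_⟩
  · show a * (y * a * y) * a = a
    simp only [mul_assoc]
    rw [h1', h1']
  · show (y * a * y) * a * (y * a * y) = y * a * y
    simp only [mul_assoc]
    rw [K, K]
  · have e : a * (y * a * y) = a * y := by simp only [mul_assoc]; exact K y
    rw [e]; exact h3
  · have e : (y * a * y) * a = y * a := by simp only [mul_assoc]; rw [h1']
    rw [e]; exact h4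

/-- Generic core/dual core inverses from a `{1}`-inverse with self-adjoint
products, for a group invertible element. -/
lemma stmt19_core_dual_generic (a g y : R) (hg : IsGroupInverse a g)
    (h1 : a * y * a = a) (h3 : star (a * y) = a * y) (h4 : star (y * a) = y * a) :
    IsCoreInverse a (g * a * y) ∧ IsDualCoreInverse a (y * (a * g)) := by
  obtain ⟨G1, G2, G3⟩ := hg
  have h1' : a * (y * a) = a := by rw [← mul_assoc]; exact h1
  have K : ∀ t : R, a * (y * (a * t)) = a * t := fun t => by
    rw [← mul_assoc, ← mul_assoc, h1]
  have G1' : a * (g * a) = a := by rw [← mul_assoc]; exact G1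
  have ga1 : ∀ t : R, a * (g * (a * t)) = a * t := fun t => by
    rw [← mul_assoc, ← mul_assoc, G1]
  have gag : ∀ t : R, g * (a * (g * t)) = g * t := fun t => by
    rw [← mul_assoc, ← mul_assoc, G2]
  have g4 : a * (a * g) = a := by rw [G3, ← mul_assoc, G1]
  have g4' : g * (a * a) = a := by rw [← mul_assoc, ← G3]; exact G1
  have comm : ∀ t : R, g * (a * t) = a * (g * t) := fun t => by
    rw [← mul_assoc, ← G3, mul_assoc]
  constructor
  · refine ⟨?_, ?_, ?_, ?_, ?_⟩
    · show a * (g * a * y) * a = a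
      simp only [mul_assoc]
      rw [h1']; exact G1'
    · show (g * a * y) * a * (g * a * y) = g * a * y
      simp only [mul_assoc]
      rw [K, gag]
    · have e : a * (g * a * y) = a * y := by simp only [mul_assoc]; exact ga1 y
      rw [e]; exact h3
    · show (g * a * y) * a ^ 2 = a
      simp only [pow_two, mul_assoc]
      rw [K]; exact g4'
    · show a * (g * a * y) ^ 2 = g * a * y
      simp only [pow_two, mul_assoc]
      rw [ga1, comm, K]
  · refine ⟨?_, ?_, ?_, ?_, ?_⟩
    · show a * (y * (a * g)) * a = a
      simp only [mul_assoc]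
      rw [← G3, g4]; exact h1'
    · show (y * (a * g)) * a * (y * (a * g)) = y * (a * g)
      simp only [mul_assoc]
      rw [ga1, K]
    · have e : (y * (a * g)) * a = y * a := by
        simp only [mul_assoc]; rw [← G3, g4]
      rw [e]; exact h4
    · show a ^ 2 * (y * (a * g)) = a
      simp only [pow_two, mul_assoc]
      rw [K]; exact g4
    · show (y * (a * g)) ^ 2 * a = y * (a * g)
      simp only [pow_two, mul_assoc]
      rw [← G3, g4, ← comm, h1', ← G3]

/-- A Moore-Penrose inverse from a `{1,3}`-inverse and a `{1,4}`-inverse. -/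
lemma stmt19_mp_from_13_14 (a c d : R) (hc1 : a * c * a = a)
    (hc3 : star (a * c) = a * c) (hd1 : a * d * a = a)
    (hd4 : star (d * a) = d * a) : IsMPInverse a (d * a * c) := by
  have hc1' : a * (c * a) = a := by rw [← mul_assoc]; exact hc1
  have hd1' : a * (d * a) = a := by rw [← mul_assoc]; exact hd1
  have Kc : ∀ t : R, a * (c * (a * t)) = a * t := fun t => by
    rw [← mul_assoc, ← mul_assoc, hc1]
  have Kd : ∀ t : R, a * (d * (a * t)) = a * t := fun t => by
    rw [← mul_assoc, ← mul_assoc, hd1]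
  refine ⟨?_, ?_, ?_, ?_⟩
  · show a * (d * a * c) * a = a
    simp only [mul_assoc]
    rw [hc1']; exact hd1'
  · show (d * a * c) * a * (d * a * c) = d * a * c
    simp only [mul_assoc]
    rw [Kc, Kd]
  · have e : a * (d * a * c) = a * c := by simp only [mul_assoc]; exact Kd c
    rw [e]; exact hc3
  · have e : (d * a * c) * a = d * a := by simp only [mul_assoc]; rw [hc1']
    rw [e]; exact hd4

/-- If `a` is Moore-Penrose invertible and group invertible then
`u = a* + 1 - a g` is invertible. -/
lemma stmt19_mp_unit (a g x : R) (hg : IsGroupInverse a g)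
    (hx : IsMPInverse a x) : IsUnit (star a + 1 - a * g) := by
  obtain ⟨G1, G2, G3⟩ := hg
  obtain ⟨x1, x2, x3, x4⟩ := hx
  have g4 : a * (a * g) = a := by rw [G3, ← mul_assoc, G1]
  have ax1 : a * (x * a) = a := by rw [← mul_assoc, x1]
  have x2' : x * (a * x) = x := by rw [← mul_assoc, x2]
  have AX : star a * star x = x * a := by rw [← star_mul]; exact x4
  have XA : star x * star a = a * x := by rw [← star_mul]; exact x3
  have Aax : star a * (a * x) = star a := by rw [← x3, ← star_mul, x1]
  have xaA : x * a * star a = star a := by rw [← x4, ← star_mul, ax1]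
  have Xxa : star x * (x * a) = star x := by rw [← x4, ← star_mul, x2]
  have axX : a * x * star x = star x := by rw [← x3, ← star_mul, x2']
  have ua : (star a + 1 - a * g) * a = star a * a := by
    have h : (star a + 1 - a * g) * a = star a * a + a - a * g * a := by
      noncomm_ring
    rw [h, G1, add_sub_cancel_right]
  have au : a * (star a + 1 - a * g) = a * star a := by
    have h : a * (star a + 1 - a * g) = a * star a + a - a * (a * g) := by
      noncomm_ring
    rw [h, g4, add_sub_cancel_right]
  have uax : (star a + 1 - a * g) * (a * x) = star a := by
    rw [← mul_assoc, ua, mul_assoc, Aax]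
  have pX : a * g * star x = star x := by
    rw [← axX]
    simp only [mul_assoc]
    rw [← mul_assoc, ← mul_assoc, G1]
  have uX : (star a + 1 - a * g) * star x = x * a := by
    have h : (star a + 1 - a * g) * star x
        = star a * star x + star x - a * g * star x := by noncomm_ring
    rw [h, AX, pX, add_sub_cancel_right]
  have e1 : (star a + 1 - a * g) * (1 - a * x) = 1 - a * g := by
    have h : (star a + 1 - a * g) * (1 - a * x)
        = (star a + 1 - a * g) - (star a + 1 - a * g) * (a * x) := by
      noncomm_ring
    rw [h, uax]; abel
  have e2 : (1 - a * g) * (1 - x * a) = 1 - x * a := by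
    have h5 : a * g * (x * a) = a * g := by rw [G3, mul_assoc, ax1]
    have h : (1 - a * g) * (1 - x * a)
        = 1 - x * a - a * g + a * g * (x * a) := by noncomm_ring
    rw [h, h5]; abel
  have uw : (star a + 1 - a * g) * (star x + (1 - a * x) * (1 - x * a)) = 1 := by
    have h : (star a + 1 - a * g) * (star x + (1 - a * x) * (1 - x * a))
        = (star a + 1 - a * g) * star x
          + ((star a + 1 - a * g) * (1 - a * x)) * (1 - x * a) := by
      noncomm_ring
    rw [h, uX, e1, e2]; abel
  have xau : x * a * (star a + 1 - a * g) = star a := by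
    rw [mul_assoc, au, ← mul_assoc, xaA]
  have pX' : star x * (a * g) = star x := by
    rw [← Xxa, mul_assoc]
    have h : x * a * (a * g) = x * a := by rw [mul_assoc, g4]
    rw [h]
  have Xu : star x * (star a + 1 - a * g) = a * x := by
    have h : star x * (star a + 1 - a * g)
        = star x * star a + star x - star x * (a * g) := by noncomm_ring
    rw [h, XA, pX', add_sub_cancel_right]
  have e1' : (1 - x * a) * (star a + 1 - a * g) = 1 - a * g := by
    have h : (1 - x * a) * (star a + 1 - a * g)
        = (star a + 1 - a * g) - x * a * (star a + 1 - a * g) := by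
      noncomm_ring
    rw [h, xau]; abel
  have e2' : (1 - a * x) * (1 - a * g) = 1 - a * x := by
    have h5 : a * x * (a * g) = a * g := by rw [← mul_assoc, x1]
    have h : (1 - a * x) * (1 - a * g)
        = 1 - a * g - a * x + a * x * (a * g) := by noncomm_ring
    rw [h, h5]; abel
  have wu : (star x + (1 - a * x) * (1 - x * a)) * (star a + 1 - a * g) = 1 := by
    have h : (star x + (1 - a * x) * (1 - x * a)) * (star a + 1 - a * g)
        = star x * (star a + 1 - a * g)
          + (1 - a * x) * ((1 - x * a) * (star a + 1 - a * g)) := by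
      noncomm_ring
    rw [h, Xu, e1', e2']; abel
  exact ⟨⟨star a + 1 - a * g, star x + (1 - a * x) * (1 - x * a), uw, wu⟩, rfl⟩

/-- The main computational lemma for part (iii). -/
lemma stmt19_part3 (a g w : R) (hg : IsGroupInverse a g)
    (hw1 : w * (star a + 1 - a * g) = 1)
    (hw2 : (star a + 1 - a * g) * w = 1) :
    IsMPInverse a (star w * a * star w) ∧
      IsCoreInverse a (g * a * star w) ∧
      IsDualCoreInverse a (star w * (a * g)) := by
  obtain ⟨G1, G2, G3⟩ := hg
  have g4 : a * (a * g) = a := by rw [G3, ← mul_assoc, G1]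
  have aU : a * (star a + 1 - a * g) = a * star a := by
    have h : a * (star a + 1 - a * g) = a * star a + a - a * (a * g) := by
      noncomm_ring
    rw [h, g4, add_sub_cancel_right]
  have F3 : a * (star a * w) = a := by
    calc a * (star a * w) = (a * (star a + 1 - a * g)) * w := by
          rw [aU, mul_assoc]
      _ = a * ((star a + 1 - a * g) * w) := by rw [mul_assoc]
      _ = a := by rw [hw2, mul_one]
  have K1 : star w * a * star a = star a := by
    have h := congrArg star F3
    rw [star_mul, star_mul, star_star] at h
    exact h
  have kau : star w * a * (star a + 1 - a * g) = star a := by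
    rw [mul_assoc, aU, ← mul_assoc, K1]
  have kaw : star w * a = star a * w := by
    calc star w * a = star w * a * ((star a + 1 - a * g) * w) := by
          rw [hw2, mul_one]
      _ = (star w * a * (star a + 1 - a * g)) * w := by
          simp only [mul_assoc]
      _ = star a * w := by rw [kau]
  have hu' : star (star a + 1 - a * g) = a + 1 - star g * star a := by
    rw [star_sub, star_add, star_star, star_one, star_mul]
  have AGA : star a * (star g * star a) = star a := by
    rw [← star_mul, ← star_mul, G1]
  have ua : (star a + 1 - a * g) * a = star a * a := by
    have h : (star a + 1 - a * g) * a = star a * a + a - a * g * a := by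
      noncomm_ring
    rw [h, G1, add_sub_cancel_right]
  have F4 : w * (star a * a) = a := by
    calc w * (star a * a) = w * ((star a + 1 - a * g) * a) := by rw [ua]
      _ = (w * (star a + 1 - a * g)) * a := by rw [mul_assoc]
      _ = a := by rw [hw1, one_mul]
  have e3 : (w * star a) * (a + 1 - star g * star a) = a := by
    have h : (w * star a) * (a + 1 - star g * star a)
        = w * (star a * a) + w * star a - w * (star a * (star g * star a)) := by
      noncomm_ring
    rw [h, F4, AGA, add_sub_cancel_right]
  have hsu1 : star (star a + 1 - a * g) * star w = 1 := by
    rw [← star_mul, hw1, star_one]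
  have wA : w * star a = a * star w := by
    calc w * star a
        = (w * star a) * (star (star a + 1 - a * g) * star w) := by
          rw [hsu1, mul_one]
      _ = ((w * star a) * star (star a + 1 - a * g)) * star w := by
          simp only [mul_assoc]
      _ = ((w * star a) * (a + 1 - star g * star a)) * star w := by rw [hu']
      _ = a * star w := by rw [e3]
  have haka : a * star w * a = a := by
    rw [mul_assoc, kaw]; exact F3
  have hak_sa : star (a * star w) = a * star w := by
    rw [star_mul, star_star]; exact wA
  have hka_sa : star (star w * a) = star w * a := by
    rw [star_mul, star_star]; exact kaw.symm
  obtain ⟨hcore, hdual⟩ :=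
    stmt19_core_dual_generic a g (star w) ⟨G1, G2, G3⟩ haka hak_sa hka_sa
  exact ⟨stmt19_mp_generic a (star w) haka hak_sa hka_sa, hcore, hdual⟩

end Aux

/-- Proposition 5.10: for a group invertible element `a` with group inverse
`g`, `a` is both core and dual core invertible iff `a` is Moore-Penrose
invertible iff `u = a* + 1 - a g` is invertible; in this case `(u⁻¹)* a (u⁻¹)*`
is the Moore-Penrose inverse, `g a (u⁻¹)*` is the core inverse and
`(u⁻¹)* a g` is the dual core inverse of `a`. -/
theorem stmt_19 {R : Type*} [Ring R] [StarRing R] (a g : R)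
    (hg : IsGroupInverse a g) :
    (((∃ x, IsCoreInverse a x) ∧ (∃ x, IsDualCoreInverse a x)) ↔
      (∃ x, IsMPInverse a x)) ∧
    (((∃ x, IsCoreInverse a x) ∧ (∃ x, IsDualCoreInverse a x)) ↔
      IsUnit (star a + 1 - a * g)) ∧
    (∀ w, w * (star a + 1 - a * g) = 1 → (star a + 1 - a * g) * w = 1 →
      IsMPInverse a (star w * a * star w) ∧
      IsCoreInverse a (g * a * star w) ∧
      IsDualCoreInverse a (star w * (a * g))) := by
  refine ⟨⟨fun h => ?_, fun h => ?_⟩, ⟨fun h => ?_, fun h => ?_⟩,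
    fun w hw1 hw2 => stmt19_part3 a g w hg hw1 hw2⟩
  · obtain ⟨⟨c, hc⟩, ⟨d, hd⟩⟩ := h
    exact ⟨d * a * c, stmt19_mp_from_13_14 a c d hc.1 hc.2.2.1 hd.1 hd.2.2.1⟩
  · obtain ⟨x, hx⟩ := h
    obtain ⟨h1, h2⟩ := stmt19_core_dual_generic a g x hg hx.1 hx.2.2.1 hx.2.2.2
    exact ⟨⟨_, h1⟩, ⟨_, h2⟩⟩
  · obtain ⟨⟨c, hc⟩, ⟨d, hd⟩⟩ := h
    exact stmt19_mp_unit a g _ hg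
      (stmt19_mp_from_13_14 a c d hc.1 hc.2.2.1 hd.1 hd.2.2.1)
  · obtain ⟨v, hv⟩ := h
    have hw1 : (↑v⁻¹ : R) * (star a + 1 - a * g) = 1 := by
      rw [← hv]; exact v.inv_mul
    have hw2 : (star a + 1 - a * g) * (↑v⁻¹ : R) = 1 := by
      rw [← hv]; exact v.mul_inv
    obtain ⟨_, h1, h2⟩ := stmt19_part3 a g _ hg hw1 hw2
    exact ⟨⟨_, h1⟩, ⟨_, h2⟩⟩
end
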